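/- Let l be a list of simple coins with probabilities in [0,1] and nonnegative fees, let E be a real penalty, and for j ∈ ℕ let M(l, j) denote the minimum of COST(s, E) over all (order-preserving) sublists s of l of length at most j (the empty sublist having cost E). Then M satisfies: M(nil, j) = E for all j; M(l, 0) = E for all l; and M(c :: l, j+1) = min( M(l, j+1), μ_c + (1−P_c)·M(l, j) ), where c = (P_c, μ_c). (This is the correctness of the dynamic-programming recurrence for at most k tosses of one-time coins.) -/

import Mathlib

/-- Expected cost of tossing a list of simple coins `(P, μ)` in order,
paying the penalty `E` if all tosses fail. -/
noncomputable def listCost (l : List (ℝ × ℝ)) (E : ℝ) : ℝ :=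
  l.foldr (fun c a => c.2 + (1 - c.1) * a) E

/-!
A cheapest sublist of `c :: l` with at most `j + 1` coins either omits `c`, and is then a
sublist of `l` with at most `j + 1` coins, or starts with `c` followed by a sublist of `l`
with at most `j` coins. Since `listCost (c :: t) E = μ_c + (1 - P_c) · listCost t E` is
monotone in `listCost t E` when `P_c ≤ 1`, the best such tail is the cheapest one.
-/

def IsMinSublistCost (E : ℝ) (M : List (ℝ × ℝ) → ℕ → ℝ) : Prop :=
  ∀ (l : List (ℝ × ℝ)) (j : ℕ),
    (∃ s, s.Sublist l ∧ s.length ≤ j ∧ listCost s E = M l j) ∧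
    (∀ s, s.Sublist l → s.length ≤ j → M l j ≤ listCost s E)

@[simp]
theorem listCost_nil (E : ℝ) : listCost [] E = E := rfl

@[simp]
theorem listCost_cons (c : ℝ × ℝ) (l : List (ℝ × ℝ)) (E : ℝ) :
    listCost (c :: l) E = c.2 + (1 - c.1) * listCost l E := rfl

theorem le_listCost_cons_of_le {c : ℝ × ℝ} (hc : c.1 ≤ 1) {x : ℝ}
    {l : List (ℝ × ℝ)} {E : ℝ} (h : x ≤ listCost l E) :
    c.2 + (1 - c.1) * x ≤ listCost (c :: l) E := by
  rw [listCost_cons]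
  exact add_le_add_right (mul_le_mul_of_nonneg_left h (sub_nonneg.mpr hc)) _

theorem List.sublist_cons_of_length_le_succ {α : Type*} {s l : List α} {a : α} {j : ℕ}
    (hs : s.Sublist (a :: l)) (hlen : s.length ≤ j + 1) :
    (s.Sublist l ∧ s.length ≤ j + 1) ∨ ∃ t, s = a :: t ∧ t.Sublist l ∧ t.length ≤ j := by
  rcases List.sublist_cons_iff.mp hs with hl | ⟨t, rfl, ht⟩
  · exact .inl ⟨hl, hlen⟩
  · exact .inr ⟨t, rfl, ht, by simpa using hlen⟩

namespace IsMinSublistCost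

variable {E : ℝ} {M : List (ℝ × ℝ) → ℕ → ℝ}

theorem eq_of_sublist_eq_nil (hM : IsMinSublistCost E M) {l : List (ℝ × ℝ)} {j : ℕ}
    (hnil : ∀ s, s.Sublist l → s.length ≤ j → s = []) : M l j = E := by
  obtain ⟨s, hs, hlen, hcost⟩ := (hM l j).1
  rw [← hcost, hnil s hs hlen, listCost_nil]

theorem nil (hM : IsMinSublistCost E M) (j : ℕ) : M [] j = E :=
  hM.eq_of_sublist_eq_nil fun _ hs _ => List.sublist_nil.mp hs

theorem zero (hM : IsMinSublistCost E M) (l : List (ℝ × ℝ)) : M l 0 = E :=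
  hM.eq_of_sublist_eq_nil fun _ _ hlen => List.eq_nil_of_length_eq_zero (Nat.le_zero.mp hlen)

theorem cons_le (hM : IsMinSublistCost E M) (c : ℝ × ℝ) (l : List (ℝ × ℝ)) (j : ℕ) :
    M (c :: l) (j + 1) ≤ min (M l (j + 1)) (c.2 + (1 - c.1) * M l j) := by
  obtain ⟨s, hs, hlen, hcost⟩ := (hM l (j + 1)).1
  obtain ⟨t, ht, htlen, htcost⟩ := (hM l j).1
  refine le_min ?_ ?_
  · exact hcost ▸ (hM _ _).2 s (hs.trans (List.sublist_cons_self c l)) hlen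
  · rw [← htcost, ← listCost_cons]
    exact (hM _ _).2 (c :: t) (ht.cons_cons c) (by simpa using htlen)

theorem le_cons (hM : IsMinSublistCost E M) {c : ℝ × ℝ} (hc : c.1 ≤ 1)
    (l : List (ℝ × ℝ)) (j : ℕ) :
    min (M l (j + 1)) (c.2 + (1 - c.1) * M l j) ≤ M (c :: l) (j + 1) := by
  obtain ⟨s, hs, hlen, hcost⟩ := (hM (c :: l) (j + 1)).1
  rw [← hcost]
  rcases List.sublist_cons_of_length_le_succ hs hlen with ⟨hl, hlen⟩ | ⟨t, rfl, ht, htlen⟩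
  · exact (min_le_left _ _).trans ((hM l (j + 1)).2 s hl hlen)
  · exact (min_le_right _ _).trans
      (le_listCost_cons_of_le hc ((hM l j).2 t ht htlen))

end IsMinSublistCost

/-- Correctness of the dynamic-programming recurrence for at most `k` tosses of
one-time coins: if `M l j` is the minimum of `COST(s, E)` over all order-preserving
sublists `s` of `l` of length at most `j`, then `M nil j = E`, `M l 0 = E`, and
`M (c :: l) (j+1) = min (M l (j+1)) (μ_c + (1 - P_c) · M l j)` whenever the coins
of `c :: l` have probabilities in `[0,1]` and nonnegative fees. -/
theorem dynamic_programming_recurrence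
    (E : ℝ) (M : List (ℝ × ℝ) → ℕ → ℝ)
    (hM : ∀ (l : List (ℝ × ℝ)) (j : ℕ),
      (∃ s, s.Sublist l ∧ s.length ≤ j ∧ listCost s E = M l j) ∧
      (∀ s, s.Sublist l → s.length ≤ j → M l j ≤ listCost s E)) :
    (∀ j : ℕ, M [] j = E) ∧
    (∀ l : List (ℝ × ℝ), M l 0 = E) ∧
    (∀ (c : ℝ × ℝ) (l : List (ℝ × ℝ)) (j : ℕ),
      (∀ d ∈ c :: l, 0 ≤ d.1 ∧ d.1 ≤ 1 ∧ 0 ≤ d.2) →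
      M (c :: l) (j + 1) = min (M l (j + 1)) (c.2 + (1 - c.1) * M l j)) := by
  have hM : IsMinSublistCost E M := hM
  refine ⟨hM.nil, hM.zero, fun c l j hcoins => ?_⟩
  have hc : c.1 ≤ 1 := (hcoins c List.mem_cons_self).2.1
  exact le_antisymm (hM.cons_le c l j) (hM.le_cons hc l j)
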